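/- Deformation retraction onto a cubical complex: Let d ≥ 1 and let Q be any cubical subcomplex of the standard cubulation of ℝ^d (a union of closed cells, closed under taking faces). Let Q* be the dual complex: the union of those closed cells of the dual cubulation (the standard cubulation shifted by (1/2, …, 1/2)) whose dual cell is not contained in Q, where the dual of an i-cell σ is the unique (d−i)-cell of the dual cubulation intersecting σ (at its center). Then ℝ^d ∖ Q* deformation retracts onto Q: there is a continuous map H : (ℝ^d ∖ Q*) × [0,1] → ℝ^d ∖ Q* with H(x,0) = x and H(x,1) ∈ Q for all x, and H(q,t) = q for all q ∈ Q and t ∈ [0,1]. -/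

import Mathlib

open Set

noncomputable section

/-- The closed cell of the standard cubulation of `ℝ^d` with base vertex `v` and set `s`
of free directions: the product of `[v j, v j + 1]` for `j ∈ s` and `{v j}` otherwise. -/
def cellC (d : ℕ) (v : Fin d → ℤ) (s : Set (Fin d)) : Set (Fin d → ℝ) :=
  {x | ∀ j, (j ∈ s → (v j : ℝ) ≤ x j ∧ x j ≤ (v j : ℝ) + 1) ∧ (j ∉ s → x j = (v j : ℝ))}

/-- The dual cell of `cellC d v s`: the unique `(d - |s|)`-cell of the dual cubulation
(the standard cubulation shifted by `(1/2, …, 1/2)`) meeting it, at its center. -/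
def dualCellC (d : ℕ) (v : Fin d → ℤ) (s : Set (Fin d)) : Set (Fin d → ℝ) :=
  {x | ∀ j, (j ∈ s → x j = (v j : ℝ) + 1/2) ∧
    (j ∉ s → (v j : ℝ) - 1/2 ≤ x j ∧ x j ≤ (v j : ℝ) + 1/2)}

namespace CubeRetract

open Classical

variable {d : ℕ}

/-- The closed dual cube centered at `v`. -/
def cube (v : Fin d → ℤ) : Set (Fin d → ℝ) := {x | ∀ j, |x j - (v j : ℝ)| ≤ 1/2}

/-- Base vertex of the cell through `v` with sign pattern `ε`. -/
def wB (v : Fin d → ℤ) (ε : Fin d → SignType) : Fin d → ℤ :=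
  fun j => if ε j = -1 then v j - 1 else v j

/-- The cell through `v` with sign pattern `ε`. -/
def cellE (d : ℕ) (v : Fin d → ℤ) (ε : Fin d → SignType) : Set (Fin d → ℝ) :=
  cellC d (wB v ε) {j | ε j ≠ 0}

lemma wB_neg {v : Fin d → ℤ} {ε : Fin d → SignType} {j : Fin d} (h : ε j = -1) :
    wB v ε j = v j - 1 := by simp [wB, h]

lemma wB_not_neg {v : Fin d → ℤ} {ε : Fin d → SignType} {j : Fin d} (h : ε j ≠ -1) :
    wB v ε j = v j := by simp [wB, h]

lemma mem_cellE_iff {v : Fin d → ℤ} {ε : Fin d → SignType} {x : Fin d → ℝ} :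
    x ∈ cellE d v ε ↔ ∀ j,
      (ε j = 1 → (v j : ℝ) ≤ x j ∧ x j ≤ (v j : ℝ) + 1) ∧
      (ε j = -1 → (v j : ℝ) - 1 ≤ x j ∧ x j ≤ (v j : ℝ)) ∧
      (ε j = 0 → x j = (v j : ℝ)) := by
  constructor
  · intro h j
    obtain ⟨h1, h2⟩ := h j
    refine ⟨fun hp => ?_, fun hn => ?_, fun hz => ?_⟩
    · have := h1 (by simp [hp])
      rwa [wB_not_neg (by rw [hp]; decide)] at this
    · have := h1 (by simp [hn])
      rw [wB_neg hn] at this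
      push_cast at this
      exact ⟨this.1, by linarith [this.2]⟩
    · have := h2 (by simp [hz])
      rwa [wB_not_neg (by rw [hz]; decide)] at this
  · intro h j
    obtain ⟨h1, h2, h3⟩ := h j
    constructor
    · intro hs
      simp only [mem_setOf_eq] at hs
      cases hε : ε j with
      | zero => exact absurd hε hs
      | pos =>
          rw [wB_not_neg (by rw [hε]; decide)]
          exact h1 hε
      | neg =>
          rw [wB_neg hε]
          push_cast
          have := h2 hε
          constructor <;> linarith [this.1, this.2]
    · intro hs
      simp only [mem_setOf_eq, not_not] at hs
      rw [wB_not_neg (by rw [hs]; decide)]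
      exact h3 hs

/-- lower/upper description: downward closedness in the pattern order. -/
lemma cellE_mono {v : Fin d → ℤ} {ε' ε : Fin d → SignType}
    (h : ∀ j, ε' j = 0 ∨ ε' j = ε j) : cellE d v ε' ⊆ cellE d v ε := by
  intro x hx
  rw [mem_cellE_iff] at hx ⊢
  intro j
  obtain ⟨h1, h2, h3⟩ := hx j
  rcases h j with h0 | he
  · have hxj := h3 h0
    refine ⟨fun _ => ?_, fun _ => ?_, fun _ => hxj⟩ <;> rw [hxj]
    · exact ⟨le_refl _, by linarith⟩
    · exact ⟨by linarith, le_refl _⟩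
  · refine ⟨fun h' => h1 (he ▸ h'), fun h' => h2 (he ▸ h'), fun h' => h3 (he ▸ h')⟩

/-! ### The scalar soft-threshold map -/

/-- Scalar soft-threshold map, rescaled to fix `±1/2`. -/
def sth (y μ : ℝ) : ℝ := (max (y - μ) 0 - max (-y - μ) 0) / (1 - 2 * μ)

lemma sth_zero (y : ℝ) : sth y 0 = y := by
  rcases le_total y 0 with h | h
  · rw [sth, sub_zero, sub_zero, max_eq_right h, max_eq_left (by linarith)]
    ring
  · rw [sth, sub_zero, sub_zero, max_eq_left h, max_eq_right (by linarith)]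
    ring

lemma sth_abs_le {y μ : ℝ} (hμ0 : 0 ≤ μ) (hμ : μ < 1/2) (hy : |y| ≤ 1/2) :
    |sth y μ| ≤ 1/2 := by
  have hD : 0 < 1 - 2 * μ := by linarith
  have hy1 := abs_le.1 hy
  rw [sth, abs_div, abs_of_pos hD, div_le_iff₀ hD]
  rcases le_total y 0 with h | h
  · rw [max_eq_right (by linarith)]
    rw [abs_le]
    constructor
    · have : max (-y - μ) 0 ≤ 1/2 - μ := by
        apply max_le (by linarith) (by linarith)
      nlinarith [this]
    · nlinarith [le_max_right (-y - μ) 0]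
  · rw [max_eq_right (by linarith : -y - μ ≤ 0)]
    rw [abs_le]
    constructor
    · nlinarith [le_max_right (y - μ) 0]
    · have : max (y - μ) 0 ≤ 1/2 - μ := max_le (by linarith) (by linarith)
      nlinarith [this]

lemma sth_eq_half_iff {y μ : ℝ} (hμ0 : 0 ≤ μ) (hμ : μ < 1/2) (hy : |y| ≤ 1/2) :
    sth y μ = 1/2 ↔ y = 1/2 := by
  have hD : 0 < 1 - 2 * μ := by linarith
  have hy1 := abs_le.1 hy
  constructor
  · intro h
    rw [sth, div_eq_iff (ne_of_gt hD)] at h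
    by_cases hyμ : y ≤ μ
    · exfalso
      rw [max_eq_right (by linarith)] at h
      have h2 : max (-y - μ) 0 ≥ 0 := le_max_right _ _
      nlinarith
    · push_neg at hyμ
      rw [max_eq_left (by linarith), max_eq_right (by linarith)] at h
      linarith
  · intro h
    subst h
    rw [sth, max_eq_left (by linarith), max_eq_right (by linarith)]
    field_simp
    ring

lemma sth_neg (y μ : ℝ) : sth (-y) μ = - sth y μ := by
  rw [sth, sth, neg_neg]
  ring_nf

lemma sth_eq_neg_half_iff {y μ : ℝ} (hμ0 : 0 ≤ μ) (hμ : μ < 1/2) (hy : |y| ≤ 1/2) :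
    sth y μ = -(1/2) ↔ y = -(1/2) := by
  have := sth_eq_half_iff hμ0 hμ (by rwa [abs_neg] : |(-y)| ≤ 1/2)
  rw [sth_neg] at this
  constructor
  · intro h; have := this.1 (by linarith); linarith
  · intro h; have := this.2 (by linarith); linarith

lemma sth_of_abs_le {y μ : ℝ} (h : |y| ≤ μ) : sth y μ = 0 := by
  have h1 := abs_le.1 h
  rw [sth, max_eq_right (by linarith), max_eq_right (by linarith), sub_zero]
  simp

lemma sth_nonneg {y μ : ℝ} (hμ0 : 0 ≤ μ) (hμ : μ < 1/2) (h : -μ ≤ y) : 0 ≤ sth y μ := by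
  have hD : 0 < 1 - 2 * μ := by linarith
  apply div_nonneg _ (le_of_lt hD)
  rw [show max (-y - μ) 0 = 0 from max_eq_right (by linarith), sub_zero]
  exact le_max_right _ _

lemma sth_nonpos {y μ : ℝ} (hμ0 : 0 ≤ μ) (hμ : μ < 1/2) (h : y ≤ μ) : sth y μ ≤ 0 := by
  have := sth_nonneg hμ0 hμ (by linarith : -μ ≤ -y)
  rw [sth_neg] at this
  linarith

lemma sth_half {μ : ℝ} (hμ0 : 0 ≤ μ) (hμ : μ < 1/2) : sth (1/2) μ = 1/2 :=
  (sth_eq_half_iff hμ0 hμ (by rw [abs_of_nonneg] <;> norm_num)).2 rfl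

lemma sth_neg_half {μ : ℝ} (hμ0 : 0 ≤ μ) (hμ : μ < 1/2) : sth (-(1/2)) μ = -(1/2) := by
  rw [sth_neg, sth_half hμ0 hμ]

/-! ### Projection, lambda, boundary pattern -/

/-- Nearest-point projection onto the extended cell through `v` with pattern `ε`. -/
def projE (v : Fin d → ℤ) (ε : Fin d → SignType) (x : Fin d → ℝ) : Fin d → ℝ :=
  fun j => if ε j = 1 then max (x j) (v j) else if ε j = -1 then min (x j) (v j) else (v j : ℝ)

open Classical in
/-- The (capped) distance from `x` to the subcomplex `Q`, as seen from the dual cube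
centered at `v`. -/
def lam (Q : Set (Fin d → ℝ)) (v : Fin d → ℤ) (x : Fin d → ℝ) : ℝ :=
  Finset.univ.inf' Finset.univ_nonempty fun ε : Fin d → SignType =>
    if cellE d v ε ⊆ Q then min (dist x (projE v ε x)) (1/2) else 1/2

open Classical in
/-- The pattern of boundary coordinates of `x` in the dual cube centered at `v`. -/
def epsStar (v : Fin d → ℤ) (x : Fin d → ℝ) : Fin d → SignType :=
  fun j => if x j - v j = 1/2 then 1 else if x j - v j = -(1/2) then -1 else 0

lemma epsStar_pos_iff {v : Fin d → ℤ} {x : Fin d → ℝ} {j : Fin d} :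
    epsStar v x j = 1 ↔ x j - v j = 1/2 := by
  rw [epsStar]
  split_ifs with h1 h2
  · exact iff_of_true rfl h1
  · exact iff_of_false (by decide) h1
  · exact iff_of_false (by decide) h1

lemma epsStar_neg_iff {v : Fin d → ℤ} {x : Fin d → ℝ} {j : Fin d} :
    epsStar v x j = -1 ↔ x j - v j = -(1/2) := by
  rw [epsStar]
  split_ifs with h1 h2
  · exact iff_of_false (by decide) (by rw [h1]; norm_num)
  · exact iff_of_true rfl h2
  · exact iff_of_false (by decide) h2

lemma lam_nonneg (Q : Set (Fin d → ℝ)) (v : Fin d → ℤ) (x : Fin d → ℝ) :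
    0 ≤ lam Q v x := by
  apply Finset.le_inf'
  intro ε _
  split_ifs
  · exact le_min dist_nonneg (by norm_num)
  · norm_num

lemma lam_le_half (Q : Set (Fin d → ℝ)) (v : Fin d → ℤ) (x : Fin d → ℝ) :
    lam Q v x ≤ 1/2 := by
  refine le_trans (Finset.inf'_le _ (Finset.mem_univ (fun _ => 0))) ?_
  split_ifs
  · exact min_le_right _ _
  · exact le_refl _

lemma mem_cube_iff {v : Fin d → ℤ} {x : Fin d → ℝ} :
    x ∈ cube v ↔ ∀ j, |x j - (v j : ℝ)| ≤ 1/2 := Iff.rfl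

lemma lam_lt_half {Q : Set (Fin d → ℝ)} {v : Fin d → ℤ} {x : Fin d → ℝ}
    (hx : x ∈ cube v) (hQ : cellE d v (epsStar v x) ⊆ Q) : lam Q v x < 1/2 := by
  refine lt_of_le_of_lt (Finset.inf'_le _ (Finset.mem_univ (epsStar v x))) ?_
  rw [if_pos hQ]
  refine min_lt_iff.2 (Or.inl ?_)
  rw [dist_pi_lt_iff (by norm_num : (0:ℝ) < 1/2)]
  intro j
  rw [Real.dist_eq, projE]
  rcases eq_or_ne (x j - v j) (1/2) with h1 | h1
  · rw [if_pos (epsStar_pos_iff.2 h1), max_eq_left (by linarith [h1] : (v j:ℝ) ≤ x j)]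
    norm_num
  · rcases eq_or_ne (x j - v j) (-(1/2)) with h2 | h2
    · rw [if_neg (fun hc => h1 (epsStar_pos_iff.1 hc)),
        if_pos (epsStar_neg_iff.2 h2), min_eq_left (by linarith [h2] : x j ≤ (v j:ℝ))]
      norm_num
    · rw [if_neg (fun hc => h1 (epsStar_pos_iff.1 hc)),
        if_neg (fun hc => h2 (epsStar_neg_iff.1 hc))]
      rcases lt_or_eq_of_le (hx j) with h | h
      · exact h
      · exfalso
        rcases (abs_eq (by norm_num : (0:ℝ) ≤ 1/2)).1 h with h' | h'
        · exact h1 h'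
        · exact h2 h'

lemma lam_exists_opt {Q : Set (Fin d → ℝ)} {v : Fin d → ℤ} {x : Fin d → ℝ}
    (h : lam Q v x < 1/2) :
    ∃ ε, cellE d v ε ⊆ Q ∧ dist x (projE v ε x) ≤ lam Q v x := by
  classical
  obtain ⟨ε, -, hε⟩ := Finset.exists_mem_eq_inf' (Finset.univ_nonempty)
    (fun ε : Fin d → SignType =>
      if cellE d v ε ⊆ Q then min (dist x (projE v ε x)) (1/2) else 1/2)
  rw [lam] at h ⊢
  rw [hε] at h ⊢
  split_ifs at h ⊢ with hQ
  · have hd2 : dist x (projE v ε x) < 1/2 := by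
      rcases min_lt_iff.1 h with h' | h'
      · exact h'
      · norm_num at h'
    exact ⟨ε, hQ, le_min (le_refl _) hd2.le⟩
  · norm_num at h

/-! ### Integer helpers -/

lemma int_le_of_cast_lt {a b : ℤ} (h : (a : ℝ) < b + 1) : a ≤ b := by
  have : a < b + 1 := by exact_mod_cast h
  omega

/-! ### The dual complex -/

/-- The dual complex of `Q`. -/
def Qd (d : ℕ) (Q : Set (Fin d → ℝ)) : Set (Fin d → ℝ) :=
  ⋃ p ∈ {p : (Fin d → ℤ) × Set (Fin d) | ¬ cellC d p.1 p.2 ⊆ Q}, dualCellC d p.1 p.2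

lemma mem_Qd_iff {Q : Set (Fin d → ℝ)} {x : Fin d → ℝ} :
    x ∈ Qd d Q ↔ ∃ p : (Fin d → ℤ) × Set (Fin d),
      ¬ cellC d p.1 p.2 ⊆ Q ∧ x ∈ dualCellC d p.1 p.2 := by
  simp [Qd, mem_iUnion, mem_setOf_eq]

/-! ### Bridging lemmas between arbitrary cells and cells seen from a dual cube -/

lemma exists_pattern_of_mem_cell {v w : Fin d → ℤ} {s : Set (Fin d)} {x : Fin d → ℝ}
    (hx : x ∈ cube v) (hc : x ∈ cellC d w s) :
    ∃ ε, cellE d v ε = cellC d w s ∧ projE v ε x = x := by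
  classical
  have key : ∀ j, (j ∈ s → (w j = v j ∨ w j = v j - 1)) ∧ (j ∉ s → w j = v j) := by
    intro j
    have hxj := abs_le.1 (hx j)
    have h1 := (hc j).1
    have h2 := (hc j).2
    constructor
    · intro hj
      obtain ⟨hl, hr⟩ := h1 hj
      have hwle : w j ≤ v j := int_le_of_cast_lt (by linarith)
      have hwge : v j ≤ w j + 1 := int_le_of_cast_lt (by push_cast; linarith)
      omega
    · intro hj
      have hee := h2 hj
      have hh1 : w j ≤ v j := int_le_of_cast_lt (by linarith)
      have hh2 : v j ≤ w j := int_le_of_cast_lt (by linarith)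
      omega
  refine ⟨fun j => if j ∈ s then (if w j = v j then 1 else -1) else 0, ?_, ?_⟩
  · have hsupp : {j | (fun j => if j ∈ s then (if w j = v j then (1:SignType) else -1) else 0) j ≠ 0} = s := by
      ext j
      by_cases hj : j ∈ s
      · simp only [mem_setOf_eq, if_pos hj]
        split_ifs <;> simp [hj] <;> decide
      · simp [hj]
    have hw : wB v (fun j => if j ∈ s then (if w j = v j then (1:SignType) else -1) else 0) = w := by
      funext j
      rw [wB]
      by_cases hj : j ∈ s
      · by_cases hwv : w j = v j
        · rw [if_pos hj, if_pos hwv, if_neg (by decide)]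
          omega
        · rw [if_pos hj, if_neg hwv, if_pos rfl]
          have := ((key j).1 hj).resolve_left hwv
          omega
      · rw [if_neg hj, if_neg (by decide)]
        exact ((key j).2 hj).symm
    rw [cellE, hw, hsupp]
  · funext j
    rw [projE]
    by_cases hj : j ∈ s
    · by_cases hwv : w j = v j
      · rw [if_pos (by rw [if_pos hj, if_pos hwv])]
        have := ((hc j).1 hj).1
        rw [hwv] at this
        exact max_eq_left this
      · rw [if_neg (by rw [if_pos hj, if_neg hwv]; decide),
          if_pos (by rw [if_pos hj, if_neg hwv])]
        have h2 := ((hc j).1 hj).2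
        have hwe := ((key j).1 hj).resolve_left hwv
        have : x j ≤ (v j : ℝ) := by
          rw [hwe] at h2; push_cast at h2; linarith
        exact min_eq_left this
    · rw [if_neg (by rw [if_neg hj]; decide), if_neg (by rw [if_neg hj]; decide)]
      have := (hc j).2 hj
      rw [this, ((key j).2 hj)]
  
lemma lam_le_zero_of_mem {Q : Set (Fin d → ℝ)} {v w : Fin d → ℤ} {s : Set (Fin d)}
    {x : Fin d → ℝ} (hx : x ∈ cube v) (hc : x ∈ cellC d w s) (hsub : cellC d w s ⊆ Q) :
    lam Q v x ≤ 0 := by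
  classical
  obtain ⟨ε, hcell, hproj⟩ := exists_pattern_of_mem_cell hx hc
  refine le_trans (Finset.inf'_le _ (Finset.mem_univ ε)) ?_
  rw [if_pos (by rw [hcell]; exact hsub), hproj, dist_self]
  norm_num

lemma mem_Qd_of_not_sub {Q : Set (Fin d → ℝ)} {v : Fin d → ℤ} {x : Fin d → ℝ}
    (hx : x ∈ cube v) (hn : ¬ cellE d v (epsStar v x) ⊆ Q) : x ∈ Qd d Q := by
  rw [mem_Qd_iff]
  refine ⟨(wB v (epsStar v x), {j | epsStar v x j ≠ 0}), hn, ?_⟩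
  intro j
  dsimp only
  constructor
  · intro hj
    simp only [mem_setOf_eq] at hj
    cases hε : epsStar v x j with
    | zero => exact absurd hε hj
    | pos =>
        rw [wB_not_neg (by rw [hε]; decide)]
        have := epsStar_pos_iff.1 hε
        linarith
    | neg =>
        rw [wB_neg hε]
        have := epsStar_neg_iff.1 hε
        push_cast
        linarith
  · intro hj
    simp only [mem_setOf_eq, not_not] at hj
    rw [wB_not_neg (by rw [hj]; decide)]
    have := abs_le.1 (hx j)
    constructor <;> linarith [this.1, this.2]

lemma not_mem_Qd_of_sub {Q : Set (Fin d → ℝ)} {v : Fin d → ℤ} {x : Fin d → ℝ}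
    (hx : x ∈ cube v) (hQ : cellE d v (epsStar v x) ⊆ Q) : x ∉ Qd d Q := by
  classical
  intro hmem
  obtain ⟨⟨w, s⟩, hp, hxd⟩ := mem_Qd_iff.1 hmem
  simp only at hp hxd
  apply hp
  set ε' : Fin d → SignType := fun j => if j ∈ s then (if w j = v j then 1 else -1)
    else (if w j = v j then 0 else (if w j = v j + 1 then 1 else -1)) with hε'
  have key : ∀ j, (j ∈ s → (w j = v j ∨ w j = v j - 1) ∧ x j = w j + 1/2) ∧
      (j ∉ s → (w j = v j ∨ (w j = v j + 1 ∧ x j - v j = 1/2) ∨ (w j = v j - 1 ∧ x j - v j = -(1/2)))) := by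
    intro j
    have hxj := abs_le.1 (hx j)
    have h1 := (hxd j).1
    have h2 := (hxd j).2
    constructor
    · intro hj
      have hxw := h1 hj
      have hwle : w j ≤ v j := int_le_of_cast_lt (by linarith)
      have hwge : v j ≤ w j + 1 := int_le_of_cast_lt (by push_cast; linarith)
      exact ⟨by omega, hxw⟩
    · intro hj
      obtain ⟨hl, hr⟩ := h2 hj
      have hwle : w j ≤ v j + 1 := int_le_of_cast_lt (by push_cast; linarith)
      have hwge : v j ≤ w j + 1 := int_le_of_cast_lt (by push_cast; linarith)
      rcases eq_or_ne (w j) (v j) with he | he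
      · exact Or.inl he
      · rcases lt_or_gt_of_ne he with hlt | hgt
        · have hwv : w j = v j - 1 := by omega
          refine Or.inr (Or.inr ⟨hwv, ?_⟩)
          have : (w j : ℝ) = (v j : ℝ) - 1 := by exact_mod_cast congrArg (Int.cast : ℤ → ℝ) hwv
          linarith [hxj.1]
        · have hwv : w j = v j + 1 := by omega
          refine Or.inr (Or.inl ⟨hwv, ?_⟩)
          have : (w j : ℝ) = (v j : ℝ) + 1 := by exact_mod_cast congrArg (Int.cast : ℤ → ℝ) hwv
          linarith [hxj.2]
  have hsub1 : cellC d w s ⊆ cellE d v ε' := by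
    intro z hz
    rw [mem_cellE_iff]
    intro j
    have hz1 := (hz j).1
    have hz2 := (hz j).2
    by_cases hj : j ∈ s
    · have hk := (key j).1 hj
      by_cases hwv : w j = v j
      · have hεj : ε' j = 1 := by rw [hε']; simp only [if_pos hj, if_pos hwv]
        refine ⟨fun _ => ?_, fun hc => by rw [hεj] at hc; exact absurd hc (by decide),
          fun hc => by rw [hεj] at hc; exact absurd hc (by decide)⟩
        have := hz1 hj
        rw [hwv] at this
        exact this
      · have hεj : ε' j = -1 := by rw [hε']; simp only [if_pos hj, if_neg hwv]
        refine ⟨fun hc => by rw [hεj] at hc; exact absurd hc (by decide), fun _ => ?_,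
          fun hc => by rw [hεj] at hc; exact absurd hc (by decide)⟩
        have hwv' := hk.1.resolve_left hwv
        have hcast : (w j : ℝ) = (v j : ℝ) - 1 := by exact_mod_cast congrArg (Int.cast : ℤ → ℝ) hwv'
        have := hz1 hj
        constructor <;> linarith [this.1, this.2]
    · have hk := (key j).2 hj
      have hze := hz2 hj
      rcases hk with he | hk2
      · have hεj : ε' j = 0 := by rw [hε']; simp only [if_neg hj, if_pos he]
        refine ⟨fun hc => by rw [hεj] at hc; exact absurd hc (by decide),
          fun hc => by rw [hεj] at hc; exact absurd hc (by decide), fun _ => ?_⟩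
        rw [hze, he]
      · rcases hk2 with ⟨hwv, -⟩ | ⟨hwv, -⟩
        · have hεj : ε' j = 1 := by
            rw [hε']; simp only [if_neg hj, if_neg (by omega : ¬ w j = v j), if_pos hwv]
          refine ⟨fun _ => ?_, fun hc => by rw [hεj] at hc; exact absurd hc (by decide),
            fun hc => by rw [hεj] at hc; exact absurd hc (by decide)⟩
          have hcast : (w j : ℝ) = (v j : ℝ) + 1 := by exact_mod_cast congrArg (Int.cast : ℤ → ℝ) hwv
          rw [hze]
          constructor <;> linarith
        · have hεj : ε' j = -1 := by
            rw [hε']; simp only [if_neg hj, if_neg (by omega : ¬ w j = v j),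
              if_neg (by omega : ¬ w j = v j + 1)]
          refine ⟨fun hc => by rw [hεj] at hc; exact absurd hc (by decide), fun _ => ?_,
            fun hc => by rw [hεj] at hc; exact absurd hc (by decide)⟩
          have hcast : (w j : ℝ) = (v j : ℝ) - 1 := by exact_mod_cast congrArg (Int.cast : ℤ → ℝ) hwv
          rw [hze]
          constructor <;> linarith
  have hrel : ∀ j, ε' j = 0 ∨ ε' j = epsStar v x j := by
    intro j
    by_cases hj : j ∈ s
    · have hk := (key j).1 hj
      by_cases hwv : w j = v j
      · refine Or.inr ?_
        rw [hε']; simp only [if_pos hj, if_pos hwv]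
        have : x j - v j = 1/2 := by
          have hcast : (w j : ℝ) = (v j : ℝ) := by exact_mod_cast congrArg (Int.cast : ℤ → ℝ) hwv
          linarith [hk.2]
        exact (epsStar_pos_iff.2 this).symm
      · refine Or.inr ?_
        rw [hε']; simp only [if_pos hj, if_neg hwv]
        have hwv' := hk.1.resolve_left hwv
        have hcast : (w j : ℝ) = (v j : ℝ) - 1 := by exact_mod_cast congrArg (Int.cast : ℤ → ℝ) hwv'
        have : x j - v j = -(1/2) := by linarith [hk.2]
        exact (epsStar_neg_iff.2 this).symm
    · have hk := (key j).2 hj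
      rcases hk with he | hk2
      · exact Or.inl (by rw [hε']; simp only [if_neg hj, if_pos he])
      · rcases hk2 with ⟨hwv, hhalf⟩ | ⟨hwv, hhalf⟩
        · refine Or.inr ?_
          rw [hε']; simp only [if_neg hj, if_neg (by omega : ¬ w j = v j), if_pos hwv]
          exact (epsStar_pos_iff.2 hhalf).symm
        · refine Or.inr ?_
          rw [hε']; simp only [if_neg hj, if_neg (by omega : ¬ w j = v j),
            if_neg (by omega : ¬ w j = v j + 1)]
          exact (epsStar_neg_iff.2 hhalf).symm
  exact hsub1.trans ((cellE_mono hrel).trans hQ)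

lemma projE_pos {v : Fin d → ℤ} {ε : Fin d → SignType} {x : Fin d → ℝ} {j : Fin d}
    (h : ε j = 1) : projE v ε x j = max (x j) (v j) := by rw [projE, if_pos h]

lemma projE_neg {v : Fin d → ℤ} {ε : Fin d → SignType} {x : Fin d → ℝ} {j : Fin d}
    (h : ε j = -1) : projE v ε x j = min (x j) (v j) := by
  rw [projE, if_neg (by rw [h]; decide), if_pos h]

lemma projE_zero {v : Fin d → ℤ} {ε : Fin d → SignType} {x : Fin d → ℝ} {j : Fin d}
    (h : ε j = 0) : projE v ε x j = v j := by
  rw [projE, if_neg (by rw [h]; decide), if_neg (by rw [h]; decide)]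

/-- Trichotomy for two dual cubes containing a common point. -/
lemma cube_tri {v v' : Fin d → ℤ} {x : Fin d → ℝ} (hx : x ∈ cube v) (hx' : x ∈ cube v') :
    ∀ j, v' j = v j ∨ (v' j = v j + 1 ∧ x j - v j = 1/2 ∧ x j - v' j = -(1/2)) ∨
      (v' j = v j - 1 ∧ x j - v j = -(1/2) ∧ x j - v' j = 1/2) := by
  intro j
  have h1 := abs_le.1 (hx j)
  have h2 := abs_le.1 (hx' j)
  have hle : v' j ≤ v j + 1 := int_le_of_cast_lt (by push_cast; linarith)
  have hge : v j ≤ v' j + 1 := int_le_of_cast_lt (by push_cast; linarith)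
  rcases eq_or_ne (v' j) (v j) with he | hne
  · exact Or.inl he
  · rcases lt_or_gt_of_ne hne with hlt | hgt
    · have hv : v' j = v j - 1 := by omega
      have hcast : (v' j : ℝ) = (v j : ℝ) - 1 := by exact_mod_cast congrArg (Int.cast : ℤ → ℝ) hv
      exact Or.inr (Or.inr ⟨hv, by constructor <;> linarith⟩)
    · have hv : v' j = v j + 1 := by omega
      have hcast : (v' j : ℝ) = (v j : ℝ) + 1 := by exact_mod_cast congrArg (Int.cast : ℤ → ℝ) hv
      exact Or.inr (Or.inl ⟨hv, by constructor <;> linarith⟩)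

lemma lam_frame_le {Q : Set (Fin d → ℝ)} {v v' : Fin d → ℤ} {x : Fin d → ℝ}
    (hx : x ∈ cube v) (hx' : x ∈ cube v') : lam Q v' x ≤ lam Q v x := by
  classical
  conv_rhs => rw [lam]
  apply Finset.le_inf'
  intro ε _
  by_cases hb : (if cellE d v ε ⊆ Q then min (dist x (projE v ε x)) (1/2) else 1/2) < 1/2
  swap
  · exact le_trans (lam_le_half Q v' x) (not_lt.1 hb)
  split_ifs at hb ⊢ with hQ
  swap
  · norm_num at hb
  have hdist : dist x (projE v ε x) < 1/2 := by
    rcases min_lt_iff.1 hb with h' | h'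
    · exact h'
    · norm_num at h'
  have tri := cube_tri hx hx'
  -- the pattern seen from v'
  set ε' : Fin d → SignType := fun j => if v' j = v j then ε j
    else (if v' j = v j + 1 then -1 else 1) with hε'
  have epsfact : ∀ j, ¬ v' j = v j →
      (v' j = v j + 1 → ε j = 1) ∧ (v' j = v j - 1 → ε j = -1) := by
    intro j hne
    have hdj : |x j - projE v ε x j| < 1/2 :=
      lt_of_le_of_lt (by rw [← Real.dist_eq]; exact dist_le_pi_dist x (projE v ε x) j) hdist
    rcases tri j with he | ⟨hv, hy, hy'⟩ | ⟨hv, hy, hy'⟩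
    · exact absurd he hne
    · refine ⟨fun _ => ?_, fun hc => by omega⟩
      cases hε : ε j with
      | pos => rfl
      | zero =>
          exfalso; rw [projE_zero hε] at hdj
          rw [hy, abs_of_nonneg (by norm_num : (0:ℝ) ≤ 1/2)] at hdj; linarith
      | neg =>
          exfalso; rw [projE_neg hε, min_eq_right (by linarith : (v j:ℝ) ≤ x j)] at hdj
          rw [hy, abs_of_nonneg (by norm_num : (0:ℝ) ≤ 1/2)] at hdj; linarith
    · refine ⟨fun hc => by omega, fun _ => ?_⟩
      cases hε : ε j with
      | neg => rfl
      | zero =>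
          exfalso; rw [projE_zero hε] at hdj
          rw [hy, abs_of_nonpos (by norm_num : -(1/2:ℝ) ≤ 0)] at hdj; linarith
      | pos =>
          exfalso; rw [projE_pos hε, max_eq_right (by linarith : x j ≤ (v j:ℝ))] at hdj
          rw [hy, abs_of_nonpos (by norm_num : -(1/2:ℝ) ≤ 0)] at hdj; linarith
  have hproj : projE v' ε' x = projE v ε x := by
    funext j
    rcases tri j with he | ⟨hv, hy, hy'⟩ | ⟨hv, hy, hy'⟩
    · have hεj : ε' j = ε j := by rw [hε']; simp only [if_pos he]
      have hcast : (v' j : ℝ) = (v j : ℝ) := by exact_mod_cast congrArg (Int.cast : ℤ → ℝ) he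
      cases hε : ε j with
      | pos => rw [projE_pos (hεj.trans hε), projE_pos hε, hcast]
      | neg => rw [projE_neg (hεj.trans hε), projE_neg hε, hcast]
      | zero => rw [projE_zero (hεj.trans hε), projE_zero hε, hcast]
    · have hεv : ε j = 1 := (epsfact j (by omega) ).1 hv
      have hεj : ε' j = -1 := by rw [hε']; simp only [if_neg (by omega : ¬ v' j = v j), if_pos hv]
      rw [projE_neg hεj, projE_pos hεv, min_eq_left (by linarith : x j ≤ (v' j:ℝ)),
        max_eq_left (by linarith : (v j:ℝ) ≤ x j)]
    · have hεv : ε j = -1 := (epsfact j (by omega)).2 hv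
      have hεj : ε' j = 1 := by
        rw [hε']; simp only [if_neg (by omega : ¬ v' j = v j), if_neg (by omega : ¬ v' j = v j + 1)]
      rw [projE_pos hεj, projE_neg hεv, max_eq_left (by linarith : (v' j:ℝ) ≤ x j),
        min_eq_left (by linarith : x j ≤ (v j:ℝ))]
  have hcells : cellE d v' ε' ⊆ cellE d v ε := by
    intro z hz
    rw [mem_cellE_iff] at hz ⊢
    intro j
    obtain ⟨hz1, hz2, hz3⟩ := hz j
    rcases tri j with he | ⟨hv, hy, hy'⟩ | ⟨hv, hy, hy'⟩
    · have hεj : ε' j = ε j := by rw [hε']; simp only [if_pos he]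
      have hcast : (v' j : ℝ) = (v j : ℝ) := by exact_mod_cast congrArg (Int.cast : ℤ → ℝ) he
      rw [hεj, hcast] at hz1 hz2 hz3
      exact ⟨hz1, hz2, hz3⟩
    · have hεv : ε j = 1 := (epsfact j (by omega)).1 hv
      have hεj : ε' j = -1 := by rw [hε']; simp only [if_neg (by omega : ¬ v' j = v j), if_pos hv]
      have hcast : (v' j : ℝ) = (v j : ℝ) + 1 := by exact_mod_cast congrArg (Int.cast : ℤ → ℝ) hv
      have hzz := hz2 hεj
      refine ⟨fun _ => ⟨by linarith [hzz.1], by linarith [hzz.2]⟩,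
        fun hc => by rw [hεv] at hc; exact absurd hc (by decide),
        fun hc => by rw [hεv] at hc; exact absurd hc (by decide)⟩
    · have hεv : ε j = -1 := (epsfact j (by omega)).2 hv
      have hεj : ε' j = 1 := by
        rw [hε']; simp only [if_neg (by omega : ¬ v' j = v j), if_neg (by omega : ¬ v' j = v j + 1)]
      have hcast : (v' j : ℝ) = (v j : ℝ) - 1 := by exact_mod_cast congrArg (Int.cast : ℤ → ℝ) hv
      have hzz := hz1 hεj
      refine ⟨fun hc => by rw [hεv] at hc; exact absurd hc (by decide),
        fun _ => ⟨by linarith [hzz.1], by linarith [hzz.2]⟩,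
        fun hc => by rw [hεv] at hc; exact absurd hc (by decide)⟩
  refine le_trans (Finset.inf'_le _ (Finset.mem_univ ε')) ?_
  rw [if_pos (hcells.trans hQ), hproj]

lemma lam_frame_eq {Q : Set (Fin d → ℝ)} {v v' : Fin d → ℤ} {x : Fin d → ℝ}
    (hx : x ∈ cube v) (hx' : x ∈ cube v') : lam Q v x = lam Q v' x :=
  le_antisymm (lam_frame_le hx' hx) (lam_frame_le hx hx')

/-! ### The homotopy -/

/-- The homotopy, as seen from the dual cube centered at `v`. -/
def Floc (Q : Set (Fin d → ℝ)) (v : Fin d → ℤ) : (Fin d → ℝ) × ℝ → (Fin d → ℝ) :=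
  fun p j => (v j : ℝ) + sth (p.1 j - v j) (p.2 * lam Q v p.1)

/-- The homotopy. -/
def retr (Q : Set (Fin d → ℝ)) : (Fin d → ℝ) × ℝ → (Fin d → ℝ) :=
  fun p => Floc Q (fun j => round (p.1 j)) p

lemma mem_cube_round (x : Fin d → ℝ) : x ∈ cube (fun j => round (x j)) :=
  fun j => abs_sub_round (x j)

lemma Floc_frame_eq {Q : Set (Fin d → ℝ)} {v v' : Fin d → ℤ} {x : Fin d → ℝ} {t : ℝ}
    (hx : x ∈ cube v) (hx' : x ∈ cube v') (ht0 : 0 ≤ t) (ht1 : t ≤ 1)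
    (hl : lam Q v x < 1/2) : Floc Q v (x, t) = Floc Q v' (x, t) := by
  have hl0 := lam_nonneg Q v x
  have hle : lam Q v x = lam Q v' x := lam_frame_eq hx hx'
  have hμ0 : 0 ≤ t * lam Q v x := mul_nonneg ht0 hl0
  have hμ : t * lam Q v x < 1/2 := lt_of_le_of_lt (by nlinarith) hl
  funext j
  show (v j : ℝ) + sth (x j - v j) (t * lam Q v x)
      = (v' j : ℝ) + sth (x j - v' j) (t * lam Q v' x)
  rw [← hle]
  rcases cube_tri hx hx' j with he | ⟨hv, hy, hy'⟩ | ⟨hv, hy, hy'⟩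
  · have hcast : (v' j : ℝ) = (v j : ℝ) := by exact_mod_cast congrArg (Int.cast : ℤ → ℝ) he
    rw [hcast]
  · have hcast : (v' j : ℝ) = (v j : ℝ) + 1 := by exact_mod_cast congrArg (Int.cast : ℤ → ℝ) hv
    rw [hy, hy', sth_half hμ0 hμ, sth_neg_half hμ0 hμ, hcast]
    ring
  · have hcast : (v' j : ℝ) = (v j : ℝ) - 1 := by exact_mod_cast congrArg (Int.cast : ℤ → ℝ) hv
    rw [hy, hy', sth_half hμ0 hμ, sth_neg_half hμ0 hμ, hcast]
    ring

lemma Floc_props {Q : Set (Fin d → ℝ)} {v : Fin d → ℤ} {x : Fin d → ℝ} {t : ℝ}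
    (hx : x ∈ cube v) (hQs : cellE d v (epsStar v x) ⊆ Q) (ht0 : 0 ≤ t) (ht1 : t ≤ 1) :
    Floc Q v (x, t) ∈ cube v ∧ epsStar v (Floc Q v (x, t)) = epsStar v x := by
  have hl0 := lam_nonneg Q v x
  have hl := lam_lt_half hx hQs
  have hμ0 : 0 ≤ t * lam Q v x := mul_nonneg ht0 hl0
  have hμ : t * lam Q v x < 1/2 := lt_of_le_of_lt (by nlinarith) hl
  have hz : ∀ j, Floc Q v (x, t) j - v j = sth (x j - v j) (t * lam Q v x) := by
    intro j
    show (v j : ℝ) + sth (x j - v j) (t * lam Q v x) - v j = _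
    ring
  constructor
  · intro j
    rw [mem_cube_iff] at hx
    rw [hz j]
    exact sth_abs_le hμ0 hμ (hx j)
  · funext j
    have hyabs := hx j
    cases hε : epsStar v x j with
    | pos =>
        refine epsStar_pos_iff.2 ?_
        rw [hz j, epsStar_pos_iff.1 hε, sth_half hμ0 hμ]
    | neg =>
        refine epsStar_neg_iff.2 ?_
        rw [hz j, epsStar_neg_iff.1 hε, sth_neg_half hμ0 hμ]
    | zero =>
        have hx1 : x j - v j ≠ 1/2 := fun hc =>
          absurd (hε ▸ epsStar_pos_iff.2 hc) (by decide)
        have hx2 : x j - v j ≠ -(1/2) := fun hc =>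
          absurd (hε ▸ epsStar_neg_iff.2 hc) (by decide)
        have h1 : Floc Q v (x, t) j - v j ≠ 1/2 := by
          rw [hz j]
          exact fun hc => hx1 ((sth_eq_half_iff hμ0 hμ hyabs).1 hc)
        have h2 : Floc Q v (x, t) j - v j ≠ -(1/2) := by
          rw [hz j]
          exact fun hc => hx2 ((sth_eq_neg_half_iff hμ0 hμ hyabs).1 hc)
        rw [epsStar, if_neg h1, if_neg h2]
        decide

lemma sub_of_not_mem_Qd {Q : Set (Fin d → ℝ)} {v : Fin d → ℤ} {x : Fin d → ℝ}
    (hx : x ∈ cube v) (hnQd : x ∉ Qd d Q) : cellE d v (epsStar v x) ⊆ Q := by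
  by_contra hn
  exact hnQd (mem_Qd_of_not_sub hx hn)

lemma Floc_mem_compl {Q : Set (Fin d → ℝ)} {v : Fin d → ℤ} {x : Fin d → ℝ} {t : ℝ}
    (hx : x ∈ cube v) (hnQd : x ∉ Qd d Q) (ht0 : 0 ≤ t) (ht1 : t ≤ 1) :
    Floc Q v (x, t) ∉ Qd d Q := by
  have hQs := sub_of_not_mem_Qd hx hnQd
  obtain ⟨hcube, heps⟩ := Floc_props hx hQs ht0 ht1
  exact not_mem_Qd_of_sub hcube (by rw [heps]; exact hQs)

lemma Floc_zero {Q : Set (Fin d → ℝ)} {v : Fin d → ℤ} {x : Fin d → ℝ} :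
    Floc Q v (x, 0) = x := by
  funext j
  show (v j : ℝ) + sth (x j - v j) (0 * lam Q v x) = x j
  rw [zero_mul, sth_zero]
  ring

lemma Floc_fix {Q : Set (Fin d → ℝ)} {v w : Fin d → ℤ} {s : Set (Fin d)}
    {x : Fin d → ℝ} {t : ℝ} (hx : x ∈ cube v) (hc : x ∈ cellC d w s)
    (hsub : cellC d w s ⊆ Q) : Floc Q v (x, t) = x := by
  have hl : lam Q v x = 0 :=
    le_antisymm (lam_le_zero_of_mem hx hc hsub) (lam_nonneg Q v x)
  funext j
  show (v j : ℝ) + sth (x j - v j) (t * lam Q v x) = x j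
  rw [hl, mul_zero, sth_zero]
  ring

lemma Floc_one_mem {Q : Set (Fin d → ℝ)} {v : Fin d → ℤ} {x : Fin d → ℝ}
    (hx : x ∈ cube v) (hnQd : x ∉ Qd d Q) : Floc Q v (x, 1) ∈ Q := by
  have hQs := sub_of_not_mem_Qd hx hnQd
  have hl0 := lam_nonneg Q v x
  have hl := lam_lt_half hx hQs
  obtain ⟨ε, hQ, hdist⟩ := lam_exists_opt hl
  apply hQ
  rw [mem_cellE_iff]
  intro j
  have hz : Floc Q v (x, 1) j = (v j : ℝ) + sth (x j - v j) (lam Q v x) := by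
    show (v j : ℝ) + sth (x j - v j) (1 * lam Q v x) = _
    rw [one_mul]
  have hgj : |x j - projE v ε x j| ≤ lam Q v x := by
    rw [← Real.dist_eq]
    exact le_trans (dist_le_pi_dist x (projE v ε x) j) hdist
  have hyabs := hx j
  have habs2 := abs_le.1 hyabs
  cases hε : ε j with
  | pos =>
      refine ⟨fun _ => ?_, fun hc => absurd hc (by decide),
        fun hc => absurd hc (by decide)⟩
      rw [projE_pos hε] at hgj
      have hy : -(x j - v j) ≤ lam Q v x := by
        rcases le_total (x j) ((v j : ℝ)) with h | h
        · rw [max_eq_right h] at hgj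
          have := abs_le.1 hgj
          linarith [this.1]
        · linarith
      have h1 : 0 ≤ sth (x j - v j) (lam Q v x) := sth_nonneg hl0 hl (by linarith)
      have h2 := abs_le.1 (sth_abs_le hl0 hl hyabs)
      rw [hz]
      constructor <;> linarith [h2.2]
  | neg =>
      refine ⟨fun hc => absurd hc (by decide), fun _ => ?_,
        fun hc => absurd hc (by decide)⟩
      rw [projE_neg hε] at hgj
      have hy : x j - v j ≤ lam Q v x := by
        rcases le_total (x j) ((v j : ℝ)) with h | h
        · linarith
        · rw [min_eq_right h] at hgj
          have := abs_le.1 hgj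
          linarith [this.2]
      have h1 : sth (x j - v j) (lam Q v x) ≤ 0 := sth_nonpos hl0 hl hy
      have h2 := abs_le.1 (sth_abs_le hl0 hl hyabs)
      rw [hz]
      constructor <;> linarith [h2.1]
  | zero =>
      refine ⟨fun hc => absurd hc (by decide),
        fun hc => absurd hc (by decide), fun _ => ?_⟩
      rw [projE_zero hε] at hgj
      rw [hz, sth_of_abs_le hgj]
      ring

/-! ### Continuity -/

lemma continuous_finset_inf' {ι α : Type*} [TopologicalSpace α] {s : Finset ι}
    (hs : s.Nonempty) :
    ∀ f : ι → α → ℝ, (∀ i ∈ s, Continuous (f i)) →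
      Continuous fun x => s.inf' hs fun i => f i x := by
  classical
  induction hs using Finset.Nonempty.cons_induction with
  | singleton a =>
      intro f hf
      simpa [Finset.inf'_singleton] using hf a (by simp)
  | cons a s ha hs ih =>
      intro f hf
      have heq : (fun x => (Finset.cons a s ha).inf' (Finset.cons_nonempty ha) fun i => f i x)
          = fun x => min (f a x) (s.inf' hs fun i => f i x) := by
        funext x
        rw [Finset.inf'_cons]
      rw [heq]
      exact (hf a (by simp)).min (ih _ fun i hi => hf i (by simp [hi]))

lemma continuous_projE (v : Fin d → ℤ) (ε : Fin d → SignType) :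
    Continuous fun x : Fin d → ℝ => projE v ε x := by
  apply continuous_pi
  intro j
  cases hε : ε j with
  | pos =>
      have : (fun x : Fin d → ℝ => projE v ε x j) = fun x => max (x j) ((v j : ℝ)) :=
        funext fun x => projE_pos hε
      rw [this]; exact (continuous_apply j).max continuous_const
  | neg =>
      have : (fun x : Fin d → ℝ => projE v ε x j) = fun x => min (x j) ((v j : ℝ)) :=
        funext fun x => projE_neg hε
      rw [this]; exact (continuous_apply j).min continuous_const
  | zero =>
      have : (fun x : Fin d → ℝ => projE v ε x j) = fun _ => ((v j : ℝ)) :=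
        funext fun x => projE_zero hε
      rw [this]; exact continuous_const

lemma continuous_lam (Q : Set (Fin d → ℝ)) (v : Fin d → ℤ) : Continuous (lam Q v) := by
  classical
  apply continuous_finset_inf'
  intro ε _
  by_cases h : cellE d v ε ⊆ Q
  · simp only [if_pos h]
    exact (continuous_id.dist (continuous_projE v ε)).min continuous_const
  · simp only [if_neg h]
    exact continuous_const

lemma continuousAt_Floc {Q : Set (Fin d → ℝ)} {v : Fin d → ℤ} {p : (Fin d → ℝ) × ℝ}
    (hden : 1 - 2 * (p.2 * lam Q v p.1) ≠ 0) : ContinuousAt (Floc Q v) p := by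
  apply continuousAt_pi.2
  intro j
  have hμ : Continuous fun q : (Fin d → ℝ) × ℝ => q.2 * lam Q v q.1 :=
    continuous_snd.mul ((continuous_lam Q v).comp continuous_fst)
  have hy : Continuous fun q : (Fin d → ℝ) × ℝ => q.1 j - (v j : ℝ) :=
    ((continuous_apply j).comp continuous_fst).sub continuous_const
  show ContinuousAt (fun q : (Fin d → ℝ) × ℝ => (v j : ℝ) +
    (max (q.1 j - v j - q.2 * lam Q v q.1) 0 - max (-(q.1 j - v j) - q.2 * lam Q v q.1) 0)
      / (1 - 2 * (q.2 * lam Q v q.1))) p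
  have hnum : Continuous fun q : (Fin d → ℝ) × ℝ =>
      (max (q.1 j - v j - q.2 * lam Q v q.1) 0 - max (-(q.1 j - v j) - q.2 * lam Q v q.1) 0) :=
    ((hy.sub hμ).max continuous_const).sub ((hy.neg.sub hμ).max continuous_const)
  have hd2 : Continuous fun q : (Fin d → ℝ) × ℝ => 1 - 2 * (q.2 * lam Q v q.1) :=
    continuous_const.sub (continuous_const.mul hμ)
  exact continuous_const.continuousAt.add
    ((hnum.continuousAt).div (hd2.continuousAt) hden)

lemma isClosed_cube (v : Fin d → ℤ) : IsClosed (cube v) := by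
  have : cube v = ⋂ j, {x : Fin d → ℝ | |x j - (v j : ℝ)| ≤ 1/2} := by
    ext x
    simp only [cube, mem_setOf_eq, mem_iInter]
  rw [this]
  exact isClosed_iInter fun j =>
    isClosed_le (by fun_prop) continuous_const

lemma cwa_iUnion {X Y : Type*} [TopologicalSpace X] [TopologicalSpace Y] {ι : Type*}
    [Fintype ι] {f : X → Y} {s : ι → Set X} {x : X}
    (h : ∀ i, ContinuousWithinAt f (s i) x) :
    ContinuousWithinAt f (⋃ i, s i) x := by
  classical
  have hgen : ∀ t : Finset ι, ContinuousWithinAt f (⋃ i ∈ t, s i) x := by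
    intro t
    induction t using Finset.induction with
    | empty =>
        rw [show (⋃ i ∈ (∅ : Finset ι), s i) = ∅ by simp]
        rw [ContinuousWithinAt, nhdsWithin_empty]
        exact Filter.tendsto_bot
    | insert _ _ ha ih =>
        rw [Finset.set_biUnion_insert]
        exact (h _).union ih
  have : (⋃ i, s i) = ⋃ i ∈ (Finset.univ : Finset ι), s i := by simp
  rw [this]
  exact hgen _

lemma sub_round_lt_half (x : ℝ) : x - round x < 1/2 := by
  rw [round_eq]
  have := Int.sub_one_lt_floor (x + 1/2)
  push_cast at this ⊢
  linarith

lemma continuousOn_retr (Q : Set (Fin d → ℝ)) (hd : 0 < d) :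
    ContinuousOn (retr Q) ((Qd d Q)ᶜ ×ˢ Icc (0:ℝ) 1) := by
  classical
  rintro ⟨x, t⟩ hp
  obtain ⟨hpx, hpt⟩ := hp
  haveI : Nonempty (Fin d) := ⟨⟨0, hd⟩⟩
  set r : Fin d → ℤ := fun j => round (x j) with hr
  set m : Fin d → ℝ := fun j =>
    if |x j - (r j : ℝ)| < 1/2 then 1/2 - |x j - (r j : ℝ)| else 1/2 with hm
  set δ : ℝ := Finset.univ.inf' Finset.univ_nonempty m with hδ
  have hmpos : ∀ j, 0 < m j := by
    intro j
    rw [hm]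
    dsimp only
    split_ifs with h
    · linarith
    · norm_num
  have hmle : ∀ j, m j ≤ 1/2 := by
    intro j
    rw [hm]
    dsimp only
    split_ifs with h
    · have := abs_nonneg (x j - (r j : ℝ)); linarith
    · exact le_refl _
  have hδpos : 0 < δ := Finset.lt_inf'_iff _ |>.2 fun j _ => hmpos j
  have hδle : ∀ j, δ ≤ m j := fun j => Finset.inf'_le _ (Finset.mem_univ j)
  have hδhalf : δ ≤ 1/2 := le_trans (hδle (Classical.arbitrary _)) (hmle _)
  set w : (Fin d → Bool) → (Fin d → ℤ) := fun b j => if b j then r j - 1 else r j with hw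
  set P : (Fin d → Bool) → Set ((Fin d → ℝ) × ℝ) := fun b =>
    (cube (w b) ∩ (Qd d Q)ᶜ) ×ˢ Icc (0:ℝ) 1 with hP
  have hPcwa : ∀ b, ContinuousWithinAt (retr Q) (P b) (x, t) := by
    intro b
    by_cases hxb : x ∈ cube (w b)
    · have hlam : lam Q (w b) x < 1/2 := lam_lt_half hxb (sub_of_not_mem_Qd hxb hpx)
      have hl0 := lam_nonneg Q (w b) x
      have hμ1 : t * lam Q (w b) x < 1/2 :=
        lt_of_le_of_lt (by nlinarith [hpt.1, hpt.2]) hlam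
      have hμ0 : 0 ≤ t * lam Q (w b) x := mul_nonneg hpt.1 hl0
      have hden : 1 - 2 * (((x, t).2) * lam Q (w b) ((x, t).1)) ≠ 0 := by
        show 1 - 2 * (t * lam Q (w b) x) ≠ 0
        have : 0 < 1 - 2 * (t * lam Q (w b) x) := by linarith
        exact ne_of_gt this
      refine ((continuousAt_Floc hden).continuousWithinAt).congr ?_ ?_
      · rintro ⟨z, s⟩ hzs
        obtain ⟨⟨hzc, hznQ⟩, hs⟩ := hzs
        have hzr : z ∈ cube (fun j => round (z j)) := mem_cube_round z
        have hzl : lam Q (fun j => round (z j)) z < 1/2 :=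
          lam_lt_half hzr (sub_of_not_mem_Qd hzr hznQ)
        exact Floc_frame_eq hzr hzc hs.1 hs.2 hzl
      · have hxr := mem_cube_round x
        have hxl : lam Q (fun j => round (x j)) x < 1/2 :=
          lam_lt_half hxr (sub_of_not_mem_Qd hxr hpx)
        exact Floc_frame_eq hxr hxb hpt.1 hpt.2 hxl
    · apply continuousWithinAt_of_notMem_closure
      intro hc
      have hclosed : IsClosed ((cube (w b)) ×ˢ (univ : Set ℝ)) :=
        (isClosed_cube _).prod isClosed_univ
      have hsub : P b ⊆ (cube (w b)) ×ˢ (univ : Set ℝ) :=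
        prod_mono inter_subset_left (subset_univ _)
      exact hxb ((closure_minimal hsub hclosed) hc).1
  refine (cwa_iUnion hPcwa).mono_of_mem_nhdsWithin ?_
  rw [mem_nhdsWithin]
  refine ⟨Metric.ball x δ ×ˢ (univ : Set ℝ), (Metric.isOpen_ball).prod isOpen_univ,
    ⟨Metric.mem_ball_self hδpos, mem_univ _⟩, ?_⟩
  rintro ⟨z, s⟩ ⟨⟨hzball, -⟩, hznQ, hs⟩
  set b : Fin d → Bool := fun j =>
    if (¬ |x j - (r j : ℝ)| < 1/2) ∧ z j < x j then true else false with hb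
  refine mem_iUnion.2 ⟨b, ⟨⟨?_, hznQ⟩, hs⟩⟩
  intro j
  have hzx : |z j - x j| < δ := by
    have : dist z x < δ := Metric.mem_ball.1 hzball
    exact lt_of_le_of_lt (by rw [← Real.dist_eq]; exact dist_le_pi_dist z x j) this
  have hzm : |z j - x j| < m j := lt_of_lt_of_le hzx (hδle j)
  by_cases hhalf : |x j - (r j : ℝ)| < 1/2
  · have hbj : b j = false := by
      rw [hb]
      dsimp only
      rw [if_neg]
      rintro ⟨h1, -⟩
      exact h1 hhalf
    have hwj : w b j = r j := by rw [hw]; dsimp only; rw [hbj]; simp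
    rw [hwj]
    have hmj : m j = 1/2 - |x j - (r j : ℝ)| := by rw [hm]; dsimp only; rw [if_pos hhalf]
    rw [hmj] at hzm
    calc |z j - (r j : ℝ)| ≤ |z j - x j| + |x j - (r j : ℝ)| := abs_sub_le _ _ _
      _ ≤ 1/2 := by linarith
  · have h1 : |x j - (r j : ℝ)| ≤ 1/2 := abs_sub_round (x j)
    have heq : x j - (r j : ℝ) = -(1/2) := by
      have h2 : x j - (r j : ℝ) < 1/2 := sub_round_lt_half (x j)
      have h3 : |x j - (r j : ℝ)| = 1/2 := le_antisymm h1 (not_lt.1 hhalf)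
      rcases (abs_eq (by norm_num : (0:ℝ) ≤ 1/2)).1 h3 with h' | h'
      · exact absurd h' (ne_of_lt h2)
      · exact h'
    have habs := abs_lt.1 hzx
    rcases lt_or_ge (z j) (x j) with hlt | hge
    · have hbj : b j = true := by
        rw [hb]; dsimp only; rw [if_pos ⟨hhalf, hlt⟩]
      have hwj : w b j = r j - 1 := by rw [hw]; dsimp only; rw [hbj]; simp
      rw [hwj]
      push_cast
      rw [abs_le]
      constructor <;> linarith
    · have hbj : b j = false := by
        rw [hb]; dsimp only; rw [if_neg]
        rintro ⟨-, h2⟩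
        exact absurd hge (not_le.2 h2)
      have hwj : w b j = r j := by rw [hw]; dsimp only; rw [hbj]; simp
      rw [hwj]
      rw [abs_le]
      constructor <;> linarith

end CubeRetract

/-- **Deformation retraction onto a cubical complex.** Let `Q` be a cubical subcomplex
of the standard cubulation of `ℝ^d` (a union of closed cells, closed under taking
faces), and let `Q*` be the union of those cells of the dual cubulation whose dual cell
is not contained in `Q`. Then `ℝ^d ∖ Q*` deformation retracts onto `Q`. -/
theorem cubical_deformation_retraction (d : ℕ) (hd : 1 ≤ d)
    (C : Set ((Fin d → ℤ) × Set (Fin d)))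
    (hfaces : ∀ p ∈ C, ∀ q : (Fin d → ℤ) × Set (Fin d),
      cellC d q.1 q.2 ⊆ cellC d p.1 p.2 → q ∈ C) :
    let Q : Set (Fin d → ℝ) := ⋃ p ∈ C, cellC d p.1 p.2
    let Qdual : Set (Fin d → ℝ) :=
      ⋃ p ∈ {p : (Fin d → ℤ) × Set (Fin d) | ¬ cellC d p.1 p.2 ⊆ Q},
        dualCellC d p.1 p.2
    ∃ H : ((Fin d → ℝ) × ℝ) → (Fin d → ℝ),
      ContinuousOn H (Qdualᶜ ×ˢ Icc (0:ℝ) 1) ∧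
      (∀ x ∈ Qdualᶜ, ∀ t ∈ Icc (0:ℝ) 1, H (x, t) ∈ Qdualᶜ) ∧
      (∀ x ∈ Qdualᶜ, H (x, 0) = x) ∧
      (∀ x ∈ Qdualᶜ, H (x, 1) ∈ Q) ∧
      (∀ q ∈ Q, ∀ t ∈ Icc (0:ℝ) 1, H (q, t) = q) := by
  intro Q Qdual
  have hQd : Qdual = CubeRetract.Qd d Q := rfl
  refine ⟨CubeRetract.retr Q, ?_, ?_, ?_, ?_, ?_⟩
  · rw [hQd]
    exact CubeRetract.continuousOn_retr Q hd
  · intro x hx t ht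
    rw [hQd] at hx ⊢
    exact CubeRetract.Floc_mem_compl (CubeRetract.mem_cube_round x) hx ht.1 ht.2
  · intro x hx
    exact CubeRetract.Floc_zero
  · intro x hx
    rw [hQd] at hx
    exact CubeRetract.Floc_one_mem (CubeRetract.mem_cube_round x) hx
  · intro q hq t ht
    obtain ⟨p, hpC, hqc⟩ := mem_iUnion₂.1 hq
    exact CubeRetract.Floc_fix (CubeRetract.mem_cube_round q) hqc
      (subset_biUnion_of_mem (u := fun p => cellC d p.1 p.2) hpC)

end
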